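/- For every integer k ≥ 2, the sequence {S(τ_{n,k})}_{n≥k} of exponential sums of the trapezoid Boolean functions of degree k satisfies the homogeneous linear recurrence with integer coefficients whose characteristic polynomial is p_k(X) = X^k − 2(X^{k−2} + X^{k−3} + ⋯ + X + 1); that is, S(τ_{n,k}) = 2·(S(τ_{n−2,k}) + S(τ_{n−3,k}) + ⋯ + S(τ_{n−k,k})) for all n ≥ 2k. -/

import Mathlib

open Finset

/-- Exponential sum of a Boolean function in `n` variables:
`S(F) = ∑_{x ∈ F₂ⁿ} (−1)^{F(x)}`. -/
noncomputable def boolExpSum (n : ℕ) (F : (Fin n → ZMod 2) → ZMod 2) : ℤ :=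
  ∑ x : Fin n → ZMod 2, (-1 : ℤ) ^ (F x).val

/-- Extension of a vector `x ∈ F₂ⁿ` to a function on `ℕ` (indices `0,…,n−1`
correspond to the variables `X₁,…,Xₙ`; out-of-range indices give `0`). -/
def extVar {n : ℕ} (x : Fin n → ZMod 2) : ℕ → ZMod 2 :=
  fun i => if h : i < n then x ⟨i, h⟩ else 0

/-- The trapezoid Boolean function `τ_{n,k} = ∑_{j=1}^{n−k+1} X_j X_{j+1} ⋯ X_{j+k−1}`
(in 0-indexed form). -/
def trapezoid (k n : ℕ) (x : Fin n → ZMod 2) : ZMod 2 :=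
  ∑ j ∈ Finset.range (n - k + 1), ∏ i ∈ Finset.range k, extVar x (j + i)

/-- trapezoid evaluated on an arbitrary function `ℕ → ZMod 2`. -/
def trapF (k N : ℕ) (f : ℕ → ZMod 2) : ZMod 2 :=
  ∑ j ∈ Finset.range (N - k + 1), ∏ i ∈ Finset.range k, f (j + i)

/-- the vector `y` padded with `m` ones at the end (and zeros beyond). -/
def padf (n m : ℕ) (y : Fin n → ZMod 2) : ℕ → ZMod 2 :=
  fun i => if i < n then extVar y i else if i < n + m then 1 else 0

noncomputable def gS (k m n : ℕ) : ℤ :=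
  ∑ y : Fin n → ZMod 2, (-1 : ℤ) ^ ((trapF k (n + m) (padf n m y)).val)

lemma sign_add_one (x : ZMod 2) : (-1 : ℤ) ^ ((x + 1).val) = -(-1 : ℤ) ^ x.val := by
  revert x; decide

lemma gS_zero (k n : ℕ) : gS k 0 n = boolExpSum n (trapezoid k n) := by
  unfold gS boolExpSum
  refine Finset.sum_congr rfl fun y _ => ?_
  have h : padf n 0 y = extVar y := by
    funext i
    unfold padf extVar
    by_cases h : i < n <;> simp [h]
  rw [h]
  rfl

lemma extVar_out {n : ℕ} (z : Fin n → ZMod 2) : extVar z n = 0 := by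
  simp [extVar]

/-- replacing a padded function by a shorter vector when it has a zero at position `n`. -/
lemma trapZ {k n N : ℕ} (hk : k ≤ n + 1) (hnN : n ≤ N) (hNk : N ≤ n + k)
    (f : ℕ → ZMod 2) (z : Fin n → ZMod 2) (hf : ∀ i ≤ n, f i = extVar z i) :
    trapF k N f = trapF k n (extVar z) := by
  unfold trapF
  have hsub : Finset.range (n - k + 1) ⊆ Finset.range (N - k + 1) := by
    apply Finset.range_subset_range.2; omega
  rw [← Finset.sum_subset hsub]
  · refine Finset.sum_congr rfl fun j hj => ?_
    refine Finset.prod_congr rfl fun i hi => ?_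
    simp only [Finset.mem_range] at hj hi
    exact hf _ (by omega)
  · intro j hj hj'
    simp only [Finset.mem_range] at hj hj'
    apply Finset.prod_eq_zero (i := n - j)
    · simp only [Finset.mem_range]; omega
    · have : j + (n - j) = n := by omega
      rw [this, hf n le_rfl, extVar_out]

lemma extVar_snoc {n : ℕ} (z : Fin n → ZMod 2) (a : ZMod 2) (i : ℕ) :
    extVar (Fin.snoc z a) i = if i < n then extVar z i else if i = n then a else 0 := by
  unfold extVar
  rcases lt_trichotomy i n with h | h | h
  · rw [dif_pos (by omega : i < n + 1), if_pos h, dif_pos h]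
    have : (⟨i, by omega⟩ : Fin (n + 1)) = Fin.castSucc ⟨i, h⟩ := rfl
    rw [this, Fin.snoc_castSucc]
  · subst h
    rw [dif_pos (by omega : i < i + 1), if_neg (lt_irrefl i), if_pos rfl]
    have : (⟨i, by omega⟩ : Fin (i + 1)) = Fin.last i := rfl
    rw [this, Fin.snoc_last]
  · rw [dif_neg (by omega), if_neg (by omega), if_neg (by omega)]

lemma padf_snoc_one {n m : ℕ} (z : Fin n → ZMod 2) :
    padf (n + 1) m (Fin.snoc z 1) = padf n (m + 1) z := by
  funext i
  unfold padf
  rw [extVar_snoc]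
  split_ifs <;> first | rfl | omega

lemma padf_snoc_zero {n m : ℕ} (z : Fin n → ZMod 2) (i : ℕ) (hi : i ≤ n) :
    padf (n + 1) m (Fin.snoc z 0) i = extVar z i := by
  unfold padf
  rw [if_pos (by omega), extVar_snoc]
  rcases eq_or_lt_of_le hi with h | h
  · subst h; rw [if_neg (lt_irrefl i), if_pos rfl, extVar_out]
  · rw [if_pos h]

/-- splitting the sum over the last coordinate. -/
lemma gS_split (k m n : ℕ) (F : (ℕ → ZMod 2) → ℤ) :
    ∑ y : Fin (n + 1) → ZMod 2, F (padf (n + 1) m y)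
      = (∑ z : Fin n → ZMod 2, F (padf (n + 1) m (Fin.snoc z 0)))
        + ∑ z : Fin n → ZMod 2, F (padf (n + 1) m (Fin.snoc z 1)) := by
  rw [← Equiv.sum_comp (Fin.snocEquiv (fun _ => ZMod 2))
    (fun y => F (padf (n + 1) m y)), Fintype.sum_prod_type]
  have huniv : (Finset.univ : Finset (ZMod 2)) = {0, 1} := by decide
  rw [huniv, Finset.sum_insert (by decide), Finset.sum_singleton]
  congr 1

/-- Recursion: peeling the last free coordinate (for `m < k`). -/
lemma gS_rec1 {k m n : ℕ} (hm : m < k) (hkn : k ≤ n + 1) :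
    gS k m (n + 1) = gS k 0 n + gS k (m + 1) n := by
  unfold gS
  rw [gS_split k m n (fun f => (-1 : ℤ) ^ ((trapF k (n + 1 + m) f).val))]
  congr 1
  · refine Finset.sum_congr rfl fun z _ => ?_
    congr 2
    · rw [trapZ (N := n + 1 + m) (by omega) (by omega) (by omega)
        (padf (n + 1) m (Fin.snoc z 0)) z (fun i hi => padf_snoc_zero z i hi)]
      have h0 : padf n 0 z = extVar z := by
        funext i; unfold padf extVar
        by_cases h : i < n <;> simp [h]
      rw [h0]
      rfl
  · refine Finset.sum_congr rfl fun z _ => ?_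
    rw [padf_snoc_one, show n + 1 + m = n + (m + 1) from by omega]

/-- Recursion: a full block of ones at the end flips the sign. -/
lemma gS_rec2 {k n : ℕ} (hk : 1 ≤ k) (hn : 1 ≤ n) :
    gS k k n = - gS k (k - 1) n := by
  unfold gS
  rw [← Finset.sum_neg_distrib]
  refine Finset.sum_congr rfl fun y _ => ?_
  have key : trapF k (n + k) (padf n k y)
      = trapF k (n + (k - 1)) (padf n (k - 1) y) + 1 := by
    unfold trapF
    have h1 : n + k - k + 1 = n + 1 := by omega
    have h2 : n + (k - 1) - k + 1 = n := by omega
    rw [h1, h2, Finset.sum_range_succ]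
    congr 1
    · refine Finset.sum_congr rfl fun j hj => ?_
      refine Finset.prod_congr rfl fun i hi => ?_
      simp only [Finset.mem_range] at hj hi
      unfold padf
      split_ifs <;> first | rfl | omega
    · refine Finset.prod_eq_one fun i hi => ?_
      simp only [Finset.mem_range] at hi
      unfold padf
      rw [if_neg (by omega), if_pos (by omega)]
  rw [key, sign_add_one]


lemma Icc_insert_top {a b : ℕ} (h : a ≤ b + 1) :
    Finset.Icc a (b + 1) = insert (b + 1) (Finset.Icc a b) := by
  ext x; simp only [Finset.mem_Icc, Finset.mem_insert]; omega

lemma gS_tele {k : ℕ} (hk : 2 ≤ k) {N : ℕ} (hN : 2 * k - 1 ≤ N) :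
    ∀ m, m ≤ k - 1 →
      gS k 0 N = (∑ l ∈ Finset.Icc 1 m, gS k 0 (N - l)) + gS k m (N - m)
  | 0, _ => by simp
  | (m + 1), hm => by
      have ih := gS_tele hk hN m (by omega)
      have h1 : N - m = (N - (m + 1)) + 1 := by omega
      have h2 : gS k m (N - m) = gS k 0 (N - (m + 1)) + gS k (m + 1) (N - (m + 1)) := by
        rw [h1]; exact gS_rec1 (by omega) (by omega)
      rw [ih, h2, Icc_insert_top (by omega),
        Finset.sum_insert (by simp only [Finset.mem_Icc]; omega)]
      ring

lemma gS_E1 {k : ℕ} (hk : 2 ≤ k) {N : ℕ} (hN : 2 * k - 1 ≤ N) :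
    gS k 0 N = (∑ l ∈ Finset.Icc 1 k, gS k 0 (N - l)) - gS k (k - 1) (N - k) := by
  have ht := gS_tele hk hN (k - 1) le_rfl
  have h1 : N - (k - 1) = (N - k) + 1 := by omega
  have h2 : gS k (k - 1) (N - (k - 1)) = gS k 0 (N - k) - gS k (k - 1) (N - k) := by
    rw [h1, gS_rec1 (by omega) (by omega), show k - 1 + 1 = k from by omega,
      gS_rec2 (by omega) (by omega)]
    ring
  have h3 : ∑ l ∈ Finset.Icc 1 k, gS k 0 (N - l)
      = (∑ l ∈ Finset.Icc 1 (k - 1), gS k 0 (N - l)) + gS k 0 (N - k) := by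
    have hins : Finset.Icc 1 k = insert k (Finset.Icc 1 (k - 1)) := by
      ext x; simp only [Finset.mem_Icc, Finset.mem_insert]; omega
    rw [hins, Finset.sum_insert (by simp only [Finset.mem_Icc]; omega)]
    ring
  rw [ht, h2, h3]; ring

/-- For every `k ≥ 2` the sequence `{S(τ_{n,k})}` satisfies the homogeneous linear
recurrence with characteristic polynomial `X^k − 2(X^{k−2} + ⋯ + X + 1)`, i.e.
`S(τ_{n,k}) = 2 (S(τ_{n−2,k}) + S(τ_{n−3,k}) + ⋯ + S(τ_{n−k,k}))` for all `n ≥ 2k`. -/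
theorem trapezoid_expSum_linear_recurrence (k : ℕ) (hk : 2 ≤ k) (n : ℕ) (hn : 2 * k ≤ n) :
    boolExpSum n (trapezoid k n) =
      2 * ∑ l ∈ Finset.Icc 2 k, boolExpSum (n - l) (trapezoid k (n - l)) := by

  have hgz : ∀ j, boolExpSum j (trapezoid k j) = gS k 0 j := fun j => (gS_zero k j).symm
  rw [hgz]
  rw [Finset.sum_congr rfl (fun l (_ : l ∈ Finset.Icc 2 k) => hgz (n - l))]
  have hA := gS_E1 hk (show 2 * k - 1 ≤ n by omega)
  have hB := gS_E1 hk (show 2 * k - 1 ≤ n - 1 by omega)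
  obtain ⟨a, ha1, ha2⟩ : ∃ a, n - k - 1 = a ∧ n - k = a + 1 := ⟨n - k - 1, rfl, by omega⟩
  have hW : gS k (k - 1) (n - k) = gS k 0 (n - k - 1) - gS k (k - 1) (n - k - 1) := by
    rw [ha1, ha2, gS_rec1 (by omega) (by omega),
      show k - 1 + 1 = k from by omega, gS_rec2 (by omega) (by omega)]
    ring
  have e1 : n - 1 - k = n - k - 1 := by omega
  rw [e1] at hB
  -- split A as S(n-1) + rest
  have hAsplit : ∑ l ∈ Finset.Icc 1 k, gS k 0 (n - l)
      = gS k 0 (n - 1) + ∑ l ∈ Finset.Icc 2 k, gS k 0 (n - l) := by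
    have hins : Finset.Icc 1 k = insert 1 (Finset.Icc 2 k) := by
      ext x; simp only [Finset.mem_Icc, Finset.mem_insert]; omega
    rw [hins, Finset.sum_insert (by simp only [Finset.mem_Icc]; omega)]
  -- split B as rest + S(n-1-k)
  have hBsplit : ∑ l ∈ Finset.Icc 1 k, gS k 0 (n - 1 - l)
      = (∑ l ∈ Finset.Icc 1 (k - 1), gS k 0 (n - 1 - l)) + gS k 0 (n - k - 1) := by
    have hins : Finset.Icc 1 k = insert k (Finset.Icc 1 (k - 1)) := by
      ext x; simp only [Finset.mem_Icc, Finset.mem_insert]; omega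
    rw [hins, Finset.sum_insert (by simp only [Finset.mem_Icc]; omega),
      show n - 1 - k = n - k - 1 from by omega]
    ring
  have hshift : ∑ l ∈ Finset.Icc 1 (k - 1), gS k 0 (n - 1 - l)
      = ∑ l ∈ Finset.Icc 2 k, gS k 0 (n - l) := by
    refine Finset.sum_nbij' (i := fun l => l + 1) (j := fun l => l - 1) ?_ ?_ ?_ ?_ ?_
    · intro a ha; simp only [Finset.mem_Icc] at *; omega
    · intro a ha; simp only [Finset.mem_Icc] at *; omega
    · intro a ha; omega
    · intro a ha; simp only [Finset.mem_Icc] at ha; omega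
    · intro a ha
      rw [show n - 1 - a = n - (a + 1) from by omega]
  rw [hAsplit] at hA
  rw [hBsplit, hshift] at hB
  -- hA : S n = (S(n-1) + T) - W(n-k)
  -- hW : W(n-k) = S(n-k-1) - W(n-k-1)
  -- hB : S(n-1) = (T + S(n-k-1)) - W(n-k-1)
  linarith [hA, hW, hB]
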